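/- (Nielsen's expansion) Let z, w, d ∈ ℂ with Re z > 0, Re w > 0, Re(w+d) > 0 and |d| < |w|. Then γ(z, w+d) = γ(z,w) + w^{z−1} e^{−w} ∑_{j=0}^∞ ((1−z)_j/(−w)^j) · (1 − e^{−d} e_j(d)), where e_j(d) = ∑_{m=0}^{j} d^m/m!, γ(z,w) = ∫_0^w e^{−x} x^{z−1} dx is the lower incomplete gamma function (the integral taken along the straight segment from 0 to w), and (v)_j denotes the Pochhammer symbol. -/

import Mathlib

open MeasureTheory

/-- The lower incomplete gamma function `γ(z,w) = ∫_0^w e^{−x} x^{z−1} dx`,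
the integral taken along the straight segment from `0` to `w`. -/
noncomputable def lowerGamma (z w : ℂ) : ℂ :=
  ∫ t in (0:ℝ)..1, Complex.exp (-((t:ℂ) * w)) * ((t:ℂ) * w) ^ (z - 1) * w

section
open MeasureTheory Complex

lemma mul_cpow_pos_re {a b : ℂ} (ha : 0 < a.re) (hb : 0 < b.re) (s : ℂ) :
    (a * b) ^ s = a ^ s * b ^ s := by
  have ha0 : a ≠ 0 := fun h => by simp [h] at ha
  have hb0 : b ≠ 0 := fun h => by simp [h] at hb
  have harg : a.arg + b.arg ∈ Set.Ioc (-Real.pi) Real.pi := by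
    have h1 : |a.arg| < Real.pi / 2 := Complex.abs_arg_lt_pi_div_two_iff.2 (Or.inl ha)
    have h2 : |b.arg| < Real.pi / 2 := Complex.abs_arg_lt_pi_div_two_iff.2 (Or.inl hb)
    rw [abs_lt] at h1 h2
    constructor <;> [linarith; linarith]
  rw [Complex.cpow_def_of_ne_zero (mul_ne_zero ha0 hb0),
    Complex.cpow_def_of_ne_zero ha0, Complex.cpow_def_of_ne_zero hb0,
    Complex.log_mul ha0 hb0 harg, add_mul, Complex.exp_add]

end

section
open MeasureTheory Complex Finset

lemma iteratedDeriv_one_add_cpow (s : ℂ) (n : ℕ) :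
    ∀ y : ℂ, 0 < (1 + y).re →
      iteratedDeriv n (fun x : ℂ => (1 + x) ^ s) y
        = (∏ i ∈ range n, (s - i)) * (1 + y) ^ (s - n) := by
  induction n with
  | zero => intro y _; simp
  | succ n ih =>
    intro y hy
    have hopen : IsOpen {y : ℂ | 0 < (1 + y).re} := by
      have : Continuous fun y : ℂ => (1 + y).re := by continuity
      exact isOpen_lt continuous_const this
    rw [iteratedDeriv_succ]
    have hev : iteratedDeriv n (fun x : ℂ => (1 + x) ^ s)
        =ᶠ[nhds y] fun y => (∏ i ∈ range n, (s - i)) * (1 + y) ^ (s - n) := by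
      filter_upwards [hopen.mem_nhds hy] with z hz using ih z hz
    rw [hev.deriv_eq]
    have h1 : HasDerivAt (fun y : ℂ => 1 + y) 1 y := (hasDerivAt_id y).const_add 1
    have h2 : HasDerivAt (fun y : ℂ => (1 + y) ^ (s - n))
        ((s - n) * (1 + y) ^ (s - n - 1) * 1) y :=
      h1.cpow_const (Or.inl hy)
    have h3 := (h2.const_mul (∏ i ∈ range n, (s - i))).deriv
    rw [h3, prod_range_succ]
    push_cast
    rw [mul_one, sub_sub, mul_assoc]

end

section
open MeasureTheory Complex Finset

lemma hasSum_one_add_cpow (s : ℂ) {x : ℂ} (hx : ‖x‖ < 1) :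
    HasSum (fun n : ℕ => (∏ i ∈ range n, (s - i)) / n.factorial * x ^ n) ((1 + x) ^ s) := by
  have hdiff : DifferentiableOn ℂ (fun y : ℂ => (1 + y) ^ s) (Metric.ball 0 1) := by
    intro y hy
    have hre : 0 < (1 + y).re := by
      simp only [Metric.mem_ball, dist_zero_right] at hy
      have h1 := abs_re_le_norm y
      have h2 := neg_abs_le y.re
      simp only [add_re, one_re]
      linarith
    exact (((hasDerivAt_id y).const_add (1:ℂ)).cpow_const
      (Or.inl hre)).differentiableAt.differentiableWithinAt
  have H := Complex.hasSum_taylorSeries_on_ball hdiff (by simpa using hx)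
  have h0 : (0:ℂ) ∈ {y : ℂ | 0 < (1 + y).re} := by norm_num
  have hfun : (fun n : ℕ => (∏ i ∈ range n, (s - i)) / n.factorial * x ^ n) =
      fun n => (n.factorial : ℂ)⁻¹ • (x - 0) ^ n • iteratedDeriv n (fun y => (1 + y) ^ s) 0 := by
    funext n
    rw [iteratedDeriv_one_add_cpow s n 0 (by norm_num), sub_zero, add_zero, one_cpow]
    simp [smul_eq_mul]
    ring
  rw [hfun]; exact H

end

section
open MeasureTheory Complex Finset intervalIntegral

lemma exp_deriv_aux (d : ℂ) (j : ℕ) (u : ℝ) :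
    HasDerivAt (fun x : ℝ => -(x:ℂ)^(j+1) * Complex.exp (-((x:ℂ) * d)))
      ((d * (u:ℂ)^(j+1) - (j+1) * (u:ℂ)^j) * Complex.exp (-((u:ℂ) * d))) u := by
  have h : HasDerivAt (fun x : ℂ => -x^(j+1) * Complex.exp (-(x * d)))
      ((d * (u:ℂ)^(j+1) - (j+1) * (u:ℂ)^j) * Complex.exp (-((u:ℂ) * d))) (u:ℂ) := by
    have h1 : HasDerivAt (fun x : ℂ => -x^(j+1)) (-((j+1) * (u:ℂ)^j)) (u:ℂ) := by
      simpa using (hasDerivAt_pow (j+1) (u:ℂ)).fun_neg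
    have h2 : HasDerivAt (fun x : ℂ => Complex.exp (-(x * d)))
        (-(d * Complex.exp (-((u:ℂ) * d)))) (u:ℂ) := by
      have := ((hasDerivAt_id (u:ℂ)).mul_const d).neg.cexp
      refine this.congr_deriv ?_
      simp; ring
    have := h1.mul h2
    refine this.congr_deriv ?_
    ring
  exact h.comp_ofReal

lemma pow_exp_step (d : ℂ) (k : ℕ) :
    d * (∫ u in (0:ℝ)..1, (u:ℂ)^(k+1) * Complex.exp (-((u:ℂ) * d)))
      = ((k:ℂ)+1) * (∫ u in (0:ℝ)..1, (u:ℂ)^k * Complex.exp (-((u:ℂ) * d)))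
        - Complex.exp (-d) := by
  have hcont : ∀ m : ℕ, Continuous fun u : ℝ => (u:ℂ)^m * Complex.exp (-((u:ℂ) * d)) := by
    intro m; continuity
  have key := intervalIntegral.integral_eq_sub_of_hasDerivAt
    (f := fun x : ℝ => -(x:ℂ)^(k+1) * Complex.exp (-((x:ℂ) * d)))
    (f' := fun u : ℝ => (d * (u:ℂ)^(k+1) - (k+1) * (u:ℂ)^k) * Complex.exp (-((u:ℂ) * d)))
    (a := 0) (b := 1)
    (fun u _ => exp_deriv_aux d k u)
    (by apply Continuous.intervalIntegrable; continuity)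
  have expand : ∀ u : ℝ, (d * (u:ℂ)^(k+1) - (k+1) * (u:ℂ)^k) * Complex.exp (-((u:ℂ) * d))
      = d * ((u:ℂ)^(k+1) * Complex.exp (-((u:ℂ) * d)))
        - ((k:ℂ)+1) * ((u:ℂ)^k * Complex.exp (-((u:ℂ) * d))) := by intro u; ring
  rw [intervalIntegral.integral_congr (fun u _ => expand u),
    intervalIntegral.integral_sub (((hcont (k+1)).intervalIntegrable _ _).const_mul d)
      (((hcont k).intervalIntegrable _ _).const_mul ((k:ℂ)+1)),
    intervalIntegral.integral_const_mul, intervalIntegral.integral_const_mul] at key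
  simp only [ofReal_zero, ofReal_one, one_pow, zero_pow (Nat.succ_ne_zero k), neg_zero,
    zero_mul, mul_zero, sub_zero, one_mul, neg_mul, neg_neg, mul_one] at key
  linear_combination key

lemma pow_exp_base (d : ℂ) :
    d * (∫ u in (0:ℝ)..1, (u:ℂ)^0 * Complex.exp (-((u:ℂ) * d)))
      = 1 - Complex.exp (-d) := by
  have key := intervalIntegral.integral_eq_sub_of_hasDerivAt
    (f := fun x : ℝ => -Complex.exp (-((x:ℂ) * d)))
    (f' := fun u : ℝ => d * Complex.exp (-((u:ℂ) * d)))
    (a := 0) (b := 1)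
    (fun u _ => by
      have h2 : HasDerivAt (fun x : ℂ => -Complex.exp (-(x * d)))
          (d * Complex.exp (-((u:ℂ) * d))) (u:ℂ) := by
        have := (((hasDerivAt_id (u:ℂ)).mul_const d).neg.cexp).neg
        refine this.congr_deriv ?_
        simp; ring
      exact h2.comp_ofReal)
    (by apply Continuous.intervalIntegrable; continuity)
  simp only [ofReal_zero, ofReal_one, zero_mul, neg_zero, Complex.exp_zero] at key
  rw [intervalIntegral.integral_const_mul] at key
  have h0 : (∫ u in (0:ℝ)..1, (u:ℂ)^0 * Complex.exp (-((u:ℂ) * d)))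
      = ∫ u in (0:ℝ)..1, Complex.exp (-((u:ℂ) * d)) := by
    apply intervalIntegral.integral_congr; intro u _; simp
  rw [h0, key]; ring

lemma integral_pow_mul_exp (d : ℂ) (j : ℕ) :
    d ^ (j+1) * ∫ u in (0:ℝ)..1, (u:ℂ)^j * Complex.exp (-((u:ℂ) * d)) =
      (j.factorial : ℂ) * (1 - Complex.exp (-d) * ∑ m ∈ range (j+1), d^m / m.factorial) := by
  induction j with
  | zero =>
    simpa using pow_exp_base d
  | succ j ih =>
    have hfac : (((j+1).factorial : ℕ) : ℂ) = ((j:ℂ)+1) * (j.factorial : ℂ) := by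
      rw [Nat.factorial_succ]; push_cast; ring
    have hne : (((j+1).factorial : ℕ) : ℂ) ≠ 0 :=
      Nat.cast_ne_zero.mpr (Nat.factorial_ne_zero (j+1))
    have hdiv : (((j+1).factorial : ℕ) : ℂ) * (d^(j+1) / (((j+1).factorial : ℕ) : ℂ))
        = d^(j+1) := mul_div_cancel₀ _ hne
    have h1 : d ^ (j+1+1) * (∫ u in (0:ℝ)..1, (u:ℂ)^(j+1) * Complex.exp (-((u:ℂ) * d)))
        = d^(j+1) * (d * ∫ u in (0:ℝ)..1, (u:ℂ)^(j+1) * Complex.exp (-((u:ℂ) * d))) := by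
      ring
    rw [h1, pow_exp_step d j, Finset.sum_range_succ (fun m => d^m / (m.factorial : ℂ)) (j+1)]
    linear_combination ((j:ℂ)+1) * ih
      + (Complex.exp (-d) * (∑ m ∈ range (j+1), d^m / (m.factorial : ℂ)) - 1) * hfac
      + Complex.exp (-d) * hdiv

end

section
open MeasureTheory Complex Finset Set

lemma lowerGamma_eq (z c : ℂ) (hc : 0 < c.re) :
    lowerGamma z c = ∫ t in (0:ℝ)..1,
      Complex.exp (-((t:ℂ) * c)) * (t:ℂ) ^ (z-1) * c ^ z := by
  have hc0 : c ≠ 0 := fun h => by simp [h] at hc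
  apply intervalIntegral.integral_congr_ae
  filter_upwards with t ht
  rw [Set.uIoc_of_le zero_le_one] at ht
  have ht0 : (0:ℝ) < t := ht.1
  have htre : 0 < ((t:ℂ)).re := by simpa using ht0
  rw [mul_cpow_pos_re htre hc (z-1)]
  have : c ^ (z-1) * c = c ^ z := by
    have h := (Complex.cpow_add (z-1) 1 hc0).symm
    rw [Complex.cpow_one] at h
    rw [h]; ring_nf
  rw [← this]; ring

end

section
open MeasureTheory Complex Finset Set

lemma cre_pos {w d : ℂ} (hw : 0 < w.re) (hwd : 0 < (w + d).re) {u : ℝ}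
    (hu : u ∈ Icc (0:ℝ) 1) : 0 < (w + (u:ℂ) * d).re := by
  have h : (w + (u:ℂ) * d).re = w.re + u * d.re := by
    simp [Complex.add_re, Complex.mul_re]
  rw [h]
  have hwd' : 0 < w.re + d.re := by simpa using hwd
  rcases le_or_gt d.re 0 with h1 | h1
  · nlinarith [hu.1, hu.2]
  · nlinarith [hu.1, hu.2]

lemma cpow_sub_one_mul {c : ℂ} (hc : c ≠ 0) (z : ℂ) : c ^ (z - 1) * c = c ^ z := by
  have h := (Complex.cpow_add (z - 1) 1 hc).symm
  rw [Complex.cpow_one] at h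
  rw [h]; ring_nf

lemma hasDerivAt_c (w d : ℂ) (u : ℝ) :
    HasDerivAt (fun u : ℝ => w + (u:ℂ) * d) d u := by
  have h : HasDerivAt (fun x : ℂ => w + x * d) d (u:ℂ) := by
    simpa using ((hasDerivAt_id (u:ℂ)).mul_const d).const_add w
  exact h.comp_ofReal

lemma phi_hasDerivAt {z w d : ℂ} (hw : 0 < w.re) (hwd : 0 < (w + d).re)
    (t : ℝ) {u : ℝ} (hu : u ∈ Icc (0:ℝ) 1) :
    HasDerivAt (fun u : ℝ =>
        Complex.exp (-((t:ℂ) * (w + (u:ℂ) * d))) * (t:ℂ) ^ (z-1) * (w + (u:ℂ) * d) ^ z)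
      (Complex.exp (-((t:ℂ) * (w + (u:ℂ) * d))) * (t:ℂ) ^ (z-1) *
        (d * (w + (u:ℂ) * d) ^ (z-1) * (z - (t:ℂ) * (w + (u:ℂ) * d)))) u := by
  set c := w + (u:ℂ) * d with hc
  have hcre : 0 < c.re := cre_pos hw hwd hu
  have hc0 : c ≠ 0 := fun h => by rw [h] at hcre; simp at hcre
  have hcd := hasDerivAt_c w d u
  have hexp : HasDerivAt (fun u : ℝ => Complex.exp (-((t:ℂ) * (w + (u:ℂ) * d))))
      (Complex.exp (-((t:ℂ) * c)) * (-((t:ℂ) * d))) u :=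
    ((hcd.const_mul (t:ℂ)).neg).cexp
  have hpow : HasDerivAt (fun u : ℝ => (w + (u:ℂ) * d) ^ z)
      (z * c ^ (z-1) * d) u := by
    have hin : HasDerivAt (fun x : ℂ => w + x * d) d (u:ℂ) := by
      simpa using ((hasDerivAt_id (u:ℂ)).mul_const d).const_add w
    have := hin.cpow_const (c := z) (Or.inl hcre)
    exact this.comp_ofReal
  have := (hexp.mul_const ((t:ℂ) ^ (z-1))).mul hpow
  refine this.congr_deriv ?_
  rw [← cpow_sub_one_mul hc0 z]
  ring

end

section
open MeasureTheory Complex Finset Set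

lemma integrableOn_helper {f : ℝ → ℂ} (hf : ContinuousOn f (Ioc 0 1)) (C e : ℝ) (he : -1 < e)
    (hb : ∀ t ∈ Ioc (0:ℝ) 1, ‖f t‖ ≤ C * t ^ e) :
    IntegrableOn f (Ioc (0:ℝ) 1) volume := by
  have hg : IntegrableOn (fun t : ℝ => C * t ^ e) (Ioc (0:ℝ) 1) volume := by
    have := (intervalIntegral.intervalIntegrable_rpow' (a := 0) (b := 1) he).const_mul C
    rwa [intervalIntegrable_iff_integrableOn_Ioc_of_le zero_le_one] at this
  refine Integrable.mono' hg (hf.aestronglyMeasurable measurableSet_Ioc) ?_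
  rw [ae_restrict_iff' measurableSet_Ioc]
  filter_upwards with t ht using hb t ht

end

section
open MeasureTheory Complex Finset Set

noncomputable def Df (z w d : ℂ) (u t : ℝ) : ℂ :=
  Complex.exp (-((t:ℂ) * (w + (u:ℂ) * d))) * (t:ℂ) ^ (z-1) *
    (d * (w + (u:ℂ) * d) ^ (z-1) * (z - (t:ℂ) * (w + (u:ℂ) * d)))

lemma contC (w d : ℂ) : Continuous (fun u : ℝ => w + (u:ℂ) * d) := by continuity

lemma contOn_D_u {z w d : ℂ} (hw : 0 < w.re) (hwd : 0 < (w + d).re) (t : ℝ) :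
    ContinuousOn (fun u : ℝ => Df z w d u t) (Icc (0:ℝ) 1) := by
  intro u hu
  apply ContinuousAt.continuousWithinAt
  have hc := (contC w d).continuousAt (x := u)
  have hcre := cre_pos hw hwd hu
  have h1 : ContinuousAt (fun u : ℝ => Complex.exp (-((t:ℂ) * (w + (u:ℂ) * d)))) u :=
    (Complex.continuous_exp.continuousAt).comp (((continuousAt_const.mul hc)).neg)
  have h2 : ContinuousAt (fun u : ℝ => (w + (u:ℂ) * d) ^ (z-1)) u :=
    hc.cpow continuousAt_const (Or.inl hcre)
  exact ((h1.mul continuousAt_const).mul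
    ((continuousAt_const.mul h2).mul (continuousAt_const.sub (continuousAt_const.mul hc))))

lemma contOn_psi (z c : ℂ) :
    ContinuousOn (fun t : ℝ => Complex.exp (-((t:ℂ) * c)) * (t:ℂ) ^ (z-1) * c ^ z)
      (Ioc (0:ℝ) 1) := by
  intro t ht
  apply ContinuousAt.continuousWithinAt
  have hoc : ContinuousAt (fun t : ℝ => (t:ℂ)) t := Complex.continuous_ofReal.continuousAt
  have h1 : ContinuousAt (fun t : ℝ => Complex.exp (-((t:ℂ) * c))) t :=
    (Complex.continuous_exp.continuousAt).comp ((hoc.mul continuousAt_const).neg)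
  have h2 : ContinuousAt (fun t : ℝ => (t:ℂ) ^ (z-1)) t := by
    refine hoc.cpow continuousAt_const (Or.inl ?_)
    simpa using ht.1
  exact (h1.mul h2).mul continuousAt_const

lemma psi_bound {z : ℂ} (c : ℂ) (hc : 0 ≤ c.re) {t : ℝ} (ht : t ∈ Ioc (0:ℝ) 1) :
    ‖Complex.exp (-((t:ℂ) * c)) * (t:ℂ) ^ (z-1) * c ^ z‖ ≤ ‖c ^ z‖ * t ^ (z.re - 1) := by
  rw [norm_mul, norm_mul]
  have h1 : ‖Complex.exp (-((t:ℂ) * c))‖ ≤ 1 := by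
    rw [Complex.norm_exp]
    apply Real.exp_le_one_iff.mpr
    simp only [neg_re, mul_re, ofReal_re, ofReal_im, zero_mul, sub_zero]
    have := mul_nonneg ht.1.le hc
    linarith
  have h2 : ‖(t:ℂ) ^ (z-1)‖ = t ^ (z.re - 1) := by
    rw [Complex.norm_cpow_eq_rpow_re_of_pos ht.1]
    norm_num
  rw [h2]
  calc ‖Complex.exp (-((t:ℂ) * c))‖ * t ^ (z.re-1) * ‖c ^ z‖
      ≤ 1 * t ^ (z.re-1) * ‖c ^ z‖ := by
        apply mul_le_mul_of_nonneg_right (mul_le_mul_of_nonneg_right h1 _) (norm_nonneg _)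
        exact Real.rpow_nonneg ht.1.le _
    _ = ‖c ^ z‖ * t ^ (z.re-1) := by ring

end

section
open MeasureTheory Complex Finset Set

lemma D_bound {z w d : ℂ} (hw : 0 < w.re) (hwd : 0 < (w + d).re) :
    ∃ K : ℝ, ∀ u ∈ Icc (0:ℝ) 1, ∀ t ∈ Ioc (0:ℝ) 1,
      ‖Df z w d u t‖ ≤ K * t ^ (z.re - 1) := by
  obtain ⟨C1, hC1⟩ : ∃ C, ∀ u ∈ Icc (0:ℝ) 1, ‖d * (w + (u:ℂ) * d) ^ (z-1)‖ ≤ C := by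
    apply isCompact_Icc.exists_bound_of_continuousOn
    intro u hu
    exact (continuousAt_const.mul ((contC w d).continuousAt.cpow continuousAt_const
      (Or.inl (cre_pos hw hwd hu)))).continuousWithinAt
  obtain ⟨C2, hC2⟩ : ∃ C, ∀ u ∈ Icc (0:ℝ) 1, ‖w + (u:ℂ) * d‖ ≤ C := by
    apply isCompact_Icc.exists_bound_of_continuousOn
    exact (contC w d).continuousOn
  have hC2nn : 0 ≤ C2 := le_trans (norm_nonneg _) (hC2 0 (by norm_num))
  have hC1nn : 0 ≤ C1 := le_trans (norm_nonneg _) (hC1 0 (by norm_num))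
  refine ⟨C1 * (‖z‖ + C2), fun u hu t ht => ?_⟩
  have hcre := cre_pos hw hwd hu
  rw [Df, norm_mul, norm_mul]
  have h1 : ‖Complex.exp (-((t:ℂ) * (w + (u:ℂ) * d)))‖ ≤ 1 := by
    rw [Complex.norm_exp]
    apply Real.exp_le_one_iff.mpr
    simp only [neg_re, mul_re, ofReal_re, ofReal_im, zero_mul, sub_zero]
    nlinarith [ht.1.le, hcre.le]
  have h2 : ‖(t:ℂ) ^ (z-1)‖ = t ^ (z.re - 1) := by
    rw [Complex.norm_cpow_eq_rpow_re_of_pos ht.1]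
    norm_num
  have h3 : ‖d * (w + (u:ℂ) * d) ^ (z-1) * (z - (t:ℂ) * (w + (u:ℂ) * d))‖
      ≤ C1 * (‖z‖ + C2) := by
    rw [norm_mul]
    have hsub : ‖z - (t:ℂ) * (w + (u:ℂ) * d)‖ ≤ ‖z‖ + C2 := by
      calc ‖z - (t:ℂ) * (w + (u:ℂ) * d)‖ ≤ ‖z‖ + ‖(t:ℂ) * (w + (u:ℂ) * d)‖ :=
            norm_sub_le _ _
        _ ≤ ‖z‖ + C2 := by
            rw [norm_mul, Complex.norm_real, Real.norm_eq_abs,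
              abs_of_pos ht.1]
            have : t * ‖w + (u:ℂ) * d‖ ≤ 1 * C2 :=
              mul_le_mul ht.2 (hC2 u hu) (norm_nonneg _) zero_le_one
            linarith
    exact mul_le_mul (hC1 u hu) hsub (norm_nonneg _) hC1nn
  calc ‖Complex.exp (-((t:ℂ) * (w + (u:ℂ) * d)))‖ * ‖(t:ℂ) ^ (z-1)‖ *
        ‖d * (w + (u:ℂ) * d) ^ (z-1) * (z - (t:ℂ) * (w + (u:ℂ) * d))‖
      ≤ 1 * (t ^ (z.re - 1)) * (C1 * (‖z‖ + C2)) := by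
        apply mul_le_mul
        · rw [h2]; exact mul_le_mul_of_nonneg_right h1 (Real.rpow_nonneg ht.1.le _)
        · exact h3
        · exact norm_nonneg _
        · simpa using Real.rpow_nonneg ht.1.le (z.re - 1)
    _ = C1 * (‖z‖ + C2) * t ^ (z.re - 1) := by ring

lemma contOn_D_t {z w d : ℂ} (hw : 0 < w.re) (hwd : 0 < (w + d).re) {u : ℝ}
    (hu : u ∈ Icc (0:ℝ) 1) :
    ContinuousOn (fun t : ℝ => Df z w d u t) (Ioc (0:ℝ) 1) := by
  intro t ht
  apply ContinuousAt.continuousWithinAt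
  have hoc : ContinuousAt (fun t : ℝ => (t:ℂ)) t := Complex.continuous_ofReal.continuousAt
  have h1 : ContinuousAt (fun t : ℝ => Complex.exp (-((t:ℂ) * (w + (u:ℂ) * d)))) t :=
    (Complex.continuous_exp.continuousAt).comp ((hoc.mul continuousAt_const).neg)
  have h2 : ContinuousAt (fun t : ℝ => (t:ℂ) ^ (z-1)) t := by
    refine hoc.cpow continuousAt_const (Or.inl ?_)
    simpa using ht.1
  exact (h1.mul h2).mul
    (continuousAt_const.mul (continuousAt_const.sub (hoc.mul continuousAt_const)))

lemma contOn_D_joint {z w d : ℂ} (hw : 0 < w.re) (hwd : 0 < (w + d).re) :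
    ContinuousOn (fun p : ℝ × ℝ => Df z w d p.2 p.1) (Ioc (0:ℝ) 1 ×ˢ Icc (0:ℝ) 1) := by
  intro p hp
  apply ContinuousAt.continuousWithinAt
  obtain ⟨ht, hu⟩ := hp
  have hoct : ContinuousAt (fun p : ℝ × ℝ => ((p.1 : ℂ))) p :=
    Complex.continuous_ofReal.continuousAt.comp continuousAt_fst
  have hc : ContinuousAt (fun p : ℝ × ℝ => w + (p.2:ℂ) * d) p :=
    ((contC w d).continuousAt.comp continuousAt_snd)
  have h1 : ContinuousAt (fun p : ℝ × ℝ =>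
      Complex.exp (-((p.1:ℂ) * (w + (p.2:ℂ) * d)))) p :=
    (Complex.continuous_exp.continuousAt).comp ((hoct.mul hc).neg)
  have h2 : ContinuousAt (fun p : ℝ × ℝ => ((p.1:ℂ)) ^ (z-1)) p := by
    refine hoct.cpow continuousAt_const (Or.inl ?_)
    simpa using ht.1
  have h3 : ContinuousAt (fun p : ℝ × ℝ => (w + (p.2:ℂ) * d) ^ (z-1)) p :=
    hc.cpow continuousAt_const (Or.inl (cre_pos hw hwd hu))
  exact (h1.mul h2).mul ((continuousAt_const.mul h3).mul
    (continuousAt_const.sub (hoct.mul hc)))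

end

section
open MeasureTheory Complex Set Filter

lemma D_intervalIntegrable {z w d : ℂ} (hz : 0 < z.re) (hw : 0 < w.re)
    (hwd : 0 < (w + d).re) {u : ℝ} (hu : u ∈ Icc (0:ℝ) 1) :
    IntervalIntegrable (fun t : ℝ => Df z w d u t) volume 0 1 := by
  obtain ⟨K, hK⟩ := D_bound (z := z) hw hwd
  rw [intervalIntegrable_iff_integrableOn_Ioc_of_le zero_le_one]
  exact integrableOn_helper (contOn_D_t hw hwd hu) K (z.re - 1) (by linarith)
    (fun t ht => hK u hu t ht)

lemma Psi_ftc {z w d : ℂ} (hz : 0 < z.re) (hw : 0 < w.re) (hwd : 0 < (w + d).re)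
    {u : ℝ} (hu : u ∈ Icc (0:ℝ) 1) :
    ∫ t in (0:ℝ)..1, Df z w d u t
      = d * (w + (u:ℂ) * d) ^ (z-1) * Complex.exp (-(w + (u:ℂ) * d)) := by
  set c := w + (u:ℂ) * d with hcdef
  have hcre : 0 < c.re := cre_pos hw hwd hu
  have hc0 : c ≠ 0 := fun h => by rw [h] at hcre; simp at hcre
  have key := intervalIntegral.integral_eq_sub_of_hasDerivAt_of_tendsto
    (f := fun t : ℝ => d * c ^ (z-1) * Complex.exp (-((t:ℂ) * c)) * (t:ℂ) ^ z)
    (f' := fun t : ℝ => Df z w d u t)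
    (a := 0) (b := 1) zero_lt_one
    (fa := 0) (fb := d * c ^ (z-1) * Complex.exp (-c))
    ?_ (D_intervalIntegrable hz hw hwd hu) ?_ ?_
  · rw [key, sub_zero]
  · -- derivative on Ioo
    intro t ht
    have hexp : HasDerivAt (fun t : ℝ => Complex.exp (-((t:ℂ) * c)))
        (Complex.exp (-((t:ℂ) * c)) * (-c)) t := by
      have h : HasDerivAt (fun x : ℂ => Complex.exp (-(x * c)))
          (Complex.exp (-((t:ℂ) * c)) * (-c)) (t:ℂ) := by
        have := (((hasDerivAt_id (t:ℂ)).mul_const c).neg).cexp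
        simpa using this
      exact h.comp_ofReal
    have hpow : HasDerivAt (fun t : ℝ => (t:ℂ) ^ z) (z * (t:ℂ) ^ (z-1)) t := by
      have h : HasDerivAt (fun x : ℂ => x ^ z) (z * (t:ℂ) ^ (z-1) * 1) (t:ℂ) :=
        (hasDerivAt_id (t:ℂ)).cpow_const (Or.inl (by simpa using ht.1))
      simpa using h.comp_ofReal
    have := ((hexp.const_mul (d * c ^ (z-1))).mul hpow)
    refine this.congr_deriv ?_
    simp only [Df]
    have ht0 : ((t:ℂ)) ≠ 0 := by
      simp only [ne_eq, ofReal_eq_zero]; exact ht.1.ne'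
    rw [← cpow_sub_one_mul ht0 z]
    ring
  · -- tendsto at 0+
    have hnorm : ∀ᶠ t : ℝ in nhdsWithin (0:ℝ) (Set.Ioi (0:ℝ)),
        ‖d * c ^ (z-1) * Complex.exp (-((t:ℂ) * c)) * (t:ℂ) ^ z‖
          ≤ ‖d * c ^ (z-1)‖ * Real.exp (‖c‖) * t ^ z.re := by
      filter_upwards [self_mem_nhdsWithin] with t (ht : 0 < t)
      rw [norm_mul, norm_mul]
      have h1 : ‖Complex.exp (-((t:ℂ) * c))‖ ≤ Real.exp ‖c‖ := by
        rw [Complex.norm_exp]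
        apply Real.exp_le_exp.mpr
        simp only [neg_re, mul_re, ofReal_re, ofReal_im, zero_mul, sub_zero]
        calc -(t * c.re) ≤ 0 := by nlinarith [hcre.le]
          _ ≤ ‖c‖ := norm_nonneg _
      have h2 : ‖(t:ℂ) ^ z‖ = t ^ z.re := by
        rw [Complex.norm_cpow_eq_rpow_re_of_pos ht]
      rw [h2]
      have := mul_le_mul_of_nonneg_left h1 (norm_nonneg (d * c ^ (z-1)))
      have h3 := mul_le_mul_of_nonneg_right this (Real.rpow_nonneg ht.le z.re)
      linarith
    have htend : Tendsto (fun t : ℝ => ‖d * c ^ (z-1)‖ * Real.exp (‖c‖) * t ^ z.re)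
        (nhdsWithin (0:ℝ) (Set.Ioi (0:ℝ))) (nhds 0) := by
      have h0 : Tendsto (fun t : ℝ => t ^ z.re) (nhdsWithin (0:ℝ) (Set.Ioi (0:ℝ))) (nhds 0) := by
        have hcont : ContinuousAt (fun t : ℝ => t ^ z.re) 0 :=
          Real.continuousAt_rpow_const 0 z.re (Or.inr hz.le)
        have := hcont.tendsto.mono_left (nhdsWithin_le_nhds (s := Set.Ioi (0:ℝ)))
        rwa [Real.zero_rpow hz.ne'] at this
      have := h0.const_mul (‖d * c ^ (z-1)‖ * Real.exp (‖c‖))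
      simpa [mul_assoc] using this
    exact squeeze_zero_norm' hnorm htend
  · -- tendsto at 1-
    have hcont : ContinuousAt (fun t : ℝ => d * c ^ (z-1) * Complex.exp (-((t:ℂ) * c)) * (t:ℂ) ^ z) 1 := by
      have hoc : ContinuousAt (fun t : ℝ => (t:ℂ)) 1 := Complex.continuous_ofReal.continuousAt
      have h1 : ContinuousAt (fun t : ℝ => Complex.exp (-((t:ℂ) * c))) 1 :=
        (Complex.continuous_exp.continuousAt).comp ((hoc.mul continuousAt_const).neg)
      have h2 : ContinuousAt (fun t : ℝ => (t:ℂ) ^ z) 1 := by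
        refine hoc.cpow continuousAt_const (Or.inl ?_)
        norm_num
      exact (continuousAt_const.mul h1).mul h2
    have := hcont.tendsto.mono_left (nhdsWithin_le_nhds (s := Set.Iio (1:ℝ)))
    simpa using this

end

section
open MeasureTheory Complex Set Filter

lemma phi_ftc {z w d : ℂ} (hw : 0 < w.re) (hwd : 0 < (w + d).re) (t : ℝ) :
    ∫ u in (0:ℝ)..1, Df z w d u t
      = Complex.exp (-((t:ℂ) * (w + d))) * (t:ℂ) ^ (z-1) * (w + d) ^ z
        - Complex.exp (-((t:ℂ) * w)) * (t:ℂ) ^ (z-1) * w ^ z := by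
  have key := intervalIntegral.integral_eq_sub_of_hasDerivAt
    (f := fun u : ℝ =>
      Complex.exp (-((t:ℂ) * (w + (u:ℂ) * d))) * (t:ℂ) ^ (z-1) * (w + (u:ℂ) * d) ^ z)
    (f' := fun u : ℝ => Df z w d u t) (a := 0) (b := 1)
    (fun u hu => phi_hasDerivAt hw hwd t (by rwa [uIcc_of_le zero_le_one] at hu))
    (((contOn_D_u hw hwd t).mono (by rw [uIcc_of_le zero_le_one])).intervalIntegrable)
  rw [key]
  norm_num

end

section
open MeasureTheory Complex Set Filter

lemma nielsen_step1 {z w d : ℂ} (hz : 0 < z.re) (hw : 0 < w.re) (hwd : 0 < (w + d).re) :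
    lowerGamma z (w + d) = lowerGamma z w
      + ∫ u in (0:ℝ)..1, d * (w + (u:ℂ) * d) ^ (z-1) * Complex.exp (-(w + (u:ℂ) * d)) := by
  set μ : Measure ℝ := volume.restrict (Ioc (0:ℝ) 1) with hμ
  have hμfin : μ (univ) = 1 := by
    rw [hμ, Measure.restrict_apply_univ, Real.volume_Ioc]
    norm_num
  have hpsiInt : ∀ c : ℂ, 0 < c.re →
      IntegrableOn (fun t : ℝ => Complex.exp (-((t:ℂ) * c)) * (t:ℂ) ^ (z-1) * c ^ z)
        (Ioc (0:ℝ) 1) volume := fun c hc =>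
    integrableOn_helper (contOn_psi z c) ‖c ^ z‖ (z.re - 1) (by linarith)
      (fun t ht => psi_bound c hc.le ht)
  -- difference as a single integral over Ioc
  have hdiff : lowerGamma z (w + d) - lowerGamma z w
      = ∫ t, (Complex.exp (-((t:ℂ) * (w+d))) * (t:ℂ) ^ (z-1) * (w+d) ^ z
          - Complex.exp (-((t:ℂ) * w)) * (t:ℂ) ^ (z-1) * w ^ z) ∂μ := by
    rw [lowerGamma_eq z (w+d) hwd, lowerGamma_eq z w hw,
      intervalIntegral.integral_of_le zero_le_one,
      intervalIntegral.integral_of_le zero_le_one, ← integral_sub (hpsiInt _ hwd) (hpsiInt _ hw)]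
  -- rewrite as double integral
  have hdouble : lowerGamma z (w + d) - lowerGamma z w
      = ∫ t, (∫ u, Df z w d u t ∂μ) ∂μ := by
    rw [hdiff]
    apply integral_congr_ae
    rw [hμ]
    filter_upwards [ae_restrict_mem measurableSet_Ioc] with t ht
    rw [← intervalIntegral.integral_of_le zero_le_one, phi_ftc hw hwd t]
  -- Fubini
  obtain ⟨K, hK⟩ := D_bound (z := z) hw hwd
  have hmeas : AEStronglyMeasurable (fun p : ℝ × ℝ => Df z w d p.2 p.1) (μ.prod μ) := by
    rw [hμ, Measure.prod_restrict]
    exact ((contOn_D_joint hw hwd).mono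
      (Set.prod_mono_right Ioc_subset_Icc_self)).aestronglyMeasurable
      (measurableSet_Ioc.prod measurableSet_Ioc)
  have hsliceInt : ∀ t : ℝ, Integrable (fun u => Df z w d u t) μ := by
    intro t
    rw [hμ]
    exact (((contOn_D_u hw hwd t).integrableOn_Icc).mono_set Ioc_subset_Icc_self)
  have hgInt : Integrable (fun t : ℝ => K * t ^ (z.re - 1)) μ := by
    rw [hμ]
    have := (intervalIntegral.intervalIntegrable_rpow' (a := 0) (b := 1)
      (show (-1:ℝ) < z.re - 1 by linarith)).const_mul K
    rwa [intervalIntegrable_iff_integrableOn_Ioc_of_le zero_le_one] at this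
  have hint : Integrable (fun p : ℝ × ℝ => Df z w d p.2 p.1) (μ.prod μ) := by
    rw [integrable_prod_iff hmeas]
    refine ⟨by filter_upwards with t using hsliceInt t, ?_⟩
    apply Integrable.mono' hgInt ((hmeas.norm).integral_prod_right')
    rw [hμ]
    filter_upwards [ae_restrict_mem measurableSet_Ioc] with t ht
    have hnn : 0 ≤ ∫ u, ‖Df z w d u t‖ ∂μ :=
      integral_nonneg (fun u => norm_nonneg _)
    rw [Real.norm_eq_abs, _root_.abs_of_nonneg (hμ ▸ hnn)]
    have h1 : ∫ u, ‖Df z w d u t‖ ∂μ ≤ ∫ _, K * t ^ (z.re - 1) ∂μ := by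
      apply integral_mono_ae ((hsliceInt t).norm) (integrable_const _)
      rw [hμ]
      filter_upwards [ae_restrict_mem measurableSet_Ioc] with u hu
      exact hK u (Ioc_subset_Icc_self hu) t ht
    calc ∫ u, ‖Df z w d u t‖ ∂μ ≤ ∫ _, K * t ^ (z.re - 1) ∂μ := h1
      _ = K * t ^ (z.re - 1) := by rw [integral_const, measureReal_def, hμfin]; simp
  have hswap := integral_integral_swap (f := fun t u => Df z w d u t) hint
  have hinner : ∫ u, (∫ t, Df z w d u t ∂μ) ∂μ
      = ∫ u, d * (w + (u:ℂ) * d) ^ (z-1) * Complex.exp (-(w + (u:ℂ) * d)) ∂μ := by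
    apply integral_congr_ae
    rw [hμ]
    filter_upwards [ae_restrict_mem measurableSet_Ioc] with u hu
    rw [← intervalIntegral.integral_of_le zero_le_one,
      Psi_ftc hz hw hwd (Ioc_subset_Icc_self hu)]
  have hfinal : lowerGamma z (w + d) - lowerGamma z w
      = ∫ u, d * (w + (u:ℂ) * d) ^ (z-1) * Complex.exp (-(w + (u:ℂ) * d)) ∂μ := by
    rw [hdouble, hswap, hinner]
  rw [intervalIntegral.integral_of_le zero_le_one, ← hμ]
  linear_combination hfinal

end

section
open MeasureTheory Complex Set Filter Finset

lemma one_add_re_pos {y : ℂ} (hy : ‖y‖ < 1) : 0 < (1 + y).re := by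
  have h1 := abs_re_le_norm y
  have h2 := neg_abs_le y.re
  simp only [add_re, one_re]
  linarith

section
variable {z w d : ℂ}

lemma a_summable (hz : 0 < z.re) (hd : ‖d‖ < ‖w‖) :
    Summable (fun j : ℕ => ‖(∏ i ∈ range j, (z - 1 - i)) / (j.factorial : ℂ) * (d / w) ^ j‖) := by
  set x := d / w with hx
  set a : ℕ → ℂ := fun j => (∏ i ∈ range j, (z - 1 - i)) / (j.factorial : ℂ) * x ^ j with ha
  have hw0 : w ≠ 0 := by
    intro h; rw [h] at hd; simp only [norm_zero] at hd
    exact absurd hd (norm_nonneg d).not_gt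
  have hq : ‖x‖ < 1 := by
    rw [hx, norm_div, div_lt_one ((norm_nonneg d).trans_lt hd)]
    exact hd
  set q := ‖x‖ with hqdef
  set r := (1 + q) / 2 with hr
  have hq0 : 0 ≤ q := norm_nonneg _
  have hr1 : r < 1 := by rw [hr]; linarith
  have hqr : q < r := by rw [hr]; linarith
  set N := ⌈(q * ‖z - 1‖) / (r - q)⌉₊ with hN
  have hrec : ∀ j : ℕ, a (j+1) = a j * ((z - 1 - j) * x / ((j:ℂ) + 1)) := by
    intro j
    rw [ha]
    simp only [prod_range_succ, Nat.factorial_succ]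
    have h1 : ((j:ℂ) + 1) ≠ 0 := Nat.cast_add_one_ne_zero j
    have h2 : ((j.factorial : ℕ) : ℂ) ≠ 0 :=
      Nat.cast_ne_zero.mpr (Nat.factorial_ne_zero j)
    push_cast
    field_simp
    ring
  have key : ∀ j ≥ N, ‖a (j+1)‖ ≤ r * ‖a j‖ := by
    intro j hj
    rw [hrec j, norm_mul]
    have hnorm : ‖(z - 1 - j) * x / ((j:ℂ) + 1)‖ ≤ r := by
      rw [norm_div, norm_mul]
      have hj1 : ‖((j:ℂ) + 1)‖ = (j:ℝ) + 1 := by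
        have : ((j:ℂ) + 1) = ((j+1 : ℕ) : ℂ) := by push_cast; ring
        rw [this, Complex.norm_natCast]; push_cast; ring
      rw [hj1, div_le_iff₀ (by positivity)]
      have hsub : ‖z - 1 - (j:ℂ)‖ ≤ ‖z - 1‖ + j := by
        calc ‖z - 1 - (j:ℂ)‖ ≤ ‖z - 1‖ + ‖(j:ℂ)‖ := norm_sub_le _ _
          _ = ‖z - 1‖ + j := by rw [Complex.norm_natCast]
      have hNle : q * ‖z - 1‖ ≤ (r - q) * j := by
        have h1 : (q * ‖z - 1‖) / (r - q) ≤ (N:ℝ) := Nat.le_ceil _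
        have h2 : (N:ℝ) ≤ j := Nat.cast_le.mpr hj
        rw [div_le_iff₀ (by linarith)] at h1
        nlinarith
      calc ‖z - 1 - (j:ℂ)‖ * q ≤ (‖z - 1‖ + j) * q := by
            apply mul_le_mul_of_nonneg_right hsub hq0
        _ ≤ r * ((j:ℝ) + 1) := by nlinarith
    calc ‖a j‖ * ‖(z - 1 - j) * x / ((j:ℂ) + 1)‖ ≤ ‖a j‖ * r :=
          mul_le_mul_of_nonneg_left hnorm (norm_nonneg _)
      _ = r * ‖a j‖ := mul_comm _ _
  apply summable_of_ratio_norm_eventually_le hr1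
  refine eventually_atTop.mpr ⟨N, fun j hj => ?_⟩
  rw [Real.norm_eq_abs, Real.norm_eq_abs, _root_.abs_of_nonneg (norm_nonneg _),
    _root_.abs_of_nonneg (norm_nonneg _)]
  exact key j hj
end

end

section
open MeasureTheory Complex Set Filter Finset

lemma term_eq {z w d : ℂ} (hw0 : w ≠ 0) (j : ℕ) :
    ((∏ i ∈ range j, (z - 1 - i)) / (j.factorial : ℂ) * (d/w)^j * d) *
      (∫ u in (0:ℝ)..1, (u:ℂ)^j * Complex.exp (-((u:ℂ) * d)))
    = (∏ i ∈ range j, (1 - z + i)) / (-w)^j *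
        (1 - Complex.exp (-d) * ∑ m ∈ range (j+1), d^m / m.factorial) := by
  have hfac : ((j.factorial : ℕ) : ℂ) ≠ 0 := Nat.cast_ne_zero.mpr (Nat.factorial_ne_zero j)
  have hm : ((-1:ℂ))^j * ((-1:ℂ))^j = 1 := by
    rw [← pow_add, ← two_mul, pow_mul]; norm_num
  have hsign : (∏ i ∈ range j, (z - 1 - i)) = (-1:ℂ)^j * ∏ i ∈ range j, (1 - z + i) := by
    calc (∏ i ∈ range j, (z - 1 - i)) = ∏ i ∈ range j, (-1) * (1 - z + i) :=
          prod_congr rfl (fun i _ => by ring)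
      _ = (-1:ℂ)^j * ∏ i ∈ range j, (1 - z + i) := by
          rw [prod_mul_distrib, prod_const, card_range]
  have hneg : ((-w):ℂ)^j = (-1:ℂ)^j * w^j := by
    rw [neg_pow]
  have hwj : (w:ℂ)^j ≠ 0 := pow_ne_zero j hw0
  have hnegj : ((-w):ℂ)^j ≠ 0 := pow_ne_zero j (neg_ne_zero.mpr hw0)
  set I := ∫ u in (0:ℝ)..1, (u:ℂ)^j * Complex.exp (-((u:ℂ) * d)) with hI
  set Q := 1 - Complex.exp (-d) * ∑ m ∈ range (j+1), d^m / (m.factorial : ℂ) with hQ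
  have hIP : d^(j+1) * I = (j.factorial : ℂ) * Q := integral_pow_mul_exp d j
  have step1 : ((∏ i ∈ range j, (z - 1 - i)) / (j.factorial : ℂ) * (d/w)^j * d) * I
      = (∏ i ∈ range j, (z - 1 - i)) / ((j.factorial : ℂ) * w^j) * (d^(j+1) * I) := by
    rw [div_pow]
    ring
  rw [step1, hIP, hsign]
  field_simp
  linear_combination (∏ i ∈ range j, (1 - z + i)) * (1 - Complex.exp (-d) * ∑ m ∈ range (j+1), d^m / (m.factorial : ℂ)) * w^j * hm

end

section
open MeasureTheory Complex Set Filter Finset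

lemma nielsen_step2 {z w d : ℂ} (hz : 0 < z.re) (hw : 0 < w.re) (hd : ‖d‖ < ‖w‖) :
    ∫ u in (0:ℝ)..1, d * (w + (u:ℂ) * d) ^ (z-1) * Complex.exp (-(w + (u:ℂ) * d))
      = w ^ (z-1) * Complex.exp (-w) *
          ∑' j : ℕ, (∏ i ∈ range j, (1 - z + (i:ℂ))) / (-w)^j *
            (1 - Complex.exp (-d) * ∑ m ∈ range (j+1), d^m / m.factorial) := by
  have hw0 : w ≠ 0 := fun h => by simp [h] at hw
  set x : ℂ := d / w with hxdef
  have hq : ‖x‖ < 1 := by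
    rw [hxdef, norm_div, div_lt_one ((norm_nonneg d).trans_lt hd)]
    exact hd
  set A : ℕ → ℂ := fun j => (∏ i ∈ range j, (z - 1 - i)) / (j.factorial : ℂ) * x ^ j with hA
  set F : ℕ → ℝ → ℂ := fun j u => (w ^ (z-1) * Complex.exp (-w) * (A j * d)) *
    ((u:ℂ)^j * Complex.exp (-((u:ℂ) * d))) with hF
  -- pointwise has sum
  have hptw : ∀ u ∈ Icc (0:ℝ) 1, HasSum (fun j => F j u)
      (d * (w + (u:ℂ) * d) ^ (z-1) * Complex.exp (-(w + (u:ℂ) * d))) := by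
    intro u hu
    have hux : ‖(u:ℂ) * x‖ < 1 := by
      rw [norm_mul]
      calc ‖(u:ℂ)‖ * ‖x‖ ≤ 1 * ‖x‖ := by
            apply mul_le_mul_of_nonneg_right _ (norm_nonneg _)
            rw [Complex.norm_real, Real.norm_eq_abs, _root_.abs_of_nonneg hu.1]
            exact hu.2
        _ = ‖x‖ := one_mul _
        _ < 1 := hq
    have H := (hasSum_one_add_cpow (z-1) hux).mul_left
      (w ^ (z-1) * Complex.exp (-w) * (d * Complex.exp (-((u:ℂ) * d))))
    have hfun : (fun j => (w ^ (z-1) * Complex.exp (-w) * (d * Complex.exp (-((u:ℂ) * d)))) *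
        ((∏ i ∈ range j, ((z-1) - i)) / (j.factorial : ℂ) * ((u:ℂ) * x) ^ j))
        = fun j => F j u := by
      funext j
      rw [hF, hA, mul_pow]
      ring
    rw [hfun] at H
    suffices e : d * (w + (u:ℂ) * d) ^ (z-1) * Complex.exp (-(w + (u:ℂ) * d)) =
        w ^ (z-1) * Complex.exp (-w) * (d * Complex.exp (-((u:ℂ) * d))) * (1 + (u:ℂ) * x) ^ (z-1) by
      rw [e]; exact H
    have hsplit : w + (u:ℂ) * d = w * (1 + (u:ℂ) * x) := by
      rw [hxdef]
      field_simp
    rw [hsplit, mul_cpow_pos_re hw (one_add_re_pos hux) (z-1)]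
    rw [show -(w * (1 + (u:ℂ) * x)) = -w + -(w * ((u:ℂ) * x)) by ring, Complex.exp_add]
    have hwux : w * ((u:ℂ) * x) = (u:ℂ) * d := by
      rw [hxdef]; field_simp
    rw [hwux]
    ring
  -- measure
  set μ : Measure ℝ := volume.restrict (Ioc (0:ℝ) 1) with hμ
  have hμuniv : μ univ = 1 := by
    rw [hμ, Measure.restrict_apply_univ, Real.volume_Ioc]
    norm_num
  -- each F j is measurable / integrable
  have hcontF : ∀ j, Continuous (F j) := by
    intro j
    rw [hF]
    refine continuous_const.mul (((Complex.continuous_ofReal.pow j).mul ?_))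
    exact Complex.continuous_exp.comp ((Complex.continuous_ofReal.mul continuous_const).neg)
  -- bound
  have hFbound : ∀ j, ∀ u ∈ Ioc (0:ℝ) 1,
      ‖F j u‖ ≤ ‖w ^ (z-1) * Complex.exp (-w) * d‖ * Real.exp ‖d‖ * ‖A j‖ := by
    intro j u hu
    rw [hF]
    have h1 : ‖(u:ℂ)^j‖ ≤ 1 := by
      rw [norm_pow, Complex.norm_real, Real.norm_eq_abs, _root_.abs_of_nonneg hu.1.le]
      exact pow_le_one₀ hu.1.le hu.2
    have h2 : ‖Complex.exp (-((u:ℂ) * d))‖ ≤ Real.exp ‖d‖ := by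
      rw [Complex.norm_exp]
      apply Real.exp_le_exp.mpr
      simp only [neg_re, mul_re, ofReal_re, ofReal_im, zero_mul, sub_zero]
      calc -(u * d.re) ≤ |u * d.re| := neg_le_abs _
        _ = u * |d.re| := by rw [abs_mul, _root_.abs_of_nonneg hu.1.le]
        _ ≤ 1 * |d.re| := by
            apply mul_le_mul_of_nonneg_right hu.2 (abs_nonneg _)
        _ = |d.re| := one_mul _
        _ ≤ ‖d‖ := by exact Complex.abs_re_le_norm d
    calc ‖w ^ (z-1) * Complex.exp (-w) * (A j * d) * ((u:ℂ)^j * Complex.exp (-((u:ℂ) * d)))‖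
        = ‖w ^ (z-1) * Complex.exp (-w) * d‖ * ‖A j‖ * (‖(u:ℂ)^j‖ * ‖Complex.exp (-((u:ℂ) * d))‖) := by
          rw [← norm_mul, ← norm_mul, ← norm_mul]
          congr 1
          ring
      _ ≤ ‖w ^ (z-1) * Complex.exp (-w) * d‖ * ‖A j‖ * (1 * Real.exp ‖d‖) := by
          apply mul_le_mul_of_nonneg_left _ (by positivity)
          exact mul_le_mul h1 h2 (norm_nonneg _) zero_le_one
      _ = ‖w ^ (z-1) * Complex.exp (-w) * d‖ * Real.exp ‖d‖ * ‖A j‖ := by ring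
  -- swap integral and sum
  have hswap : ∫ u, (∑' j, F j u) ∂μ = ∑' j, ∫ u, F j u ∂μ := by
    apply integral_tsum
    · exact fun j => (hcontF j).aestronglyMeasurable
    · apply ne_of_lt
      have hle : ∀ j, ∫⁻ u, ‖F j u‖₊ ∂μ
          ≤ ENNReal.ofReal (‖w ^ (z-1) * Complex.exp (-w) * d‖ * Real.exp ‖d‖ * ‖A j‖) := by
        intro j
        have : ∀ᵐ u ∂μ, (‖F j u‖₊ : ENNReal)
            ≤ ENNReal.ofReal (‖w ^ (z-1) * Complex.exp (-w) * d‖ * Real.exp ‖d‖ * ‖A j‖) := by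
          rw [hμ]
          filter_upwards [ae_restrict_mem measurableSet_Ioc] with u hu
          rw [← enorm_eq_nnnorm, ← ofReal_norm]
          exact ENNReal.ofReal_le_ofReal (hFbound j u hu)
        calc ∫⁻ u, ‖F j u‖₊ ∂μ
            ≤ ∫⁻ _, ENNReal.ofReal (‖w ^ (z-1) * Complex.exp (-w) * d‖ * Real.exp ‖d‖ * ‖A j‖) ∂μ :=
              lintegral_mono_ae this
          _ = ENNReal.ofReal (‖w ^ (z-1) * Complex.exp (-w) * d‖ * Real.exp ‖d‖ * ‖A j‖) := by
              rw [lintegral_const, hμuniv, mul_one]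
      calc ∑' j, ∫⁻ u, ‖F j u‖₊ ∂μ
          ≤ ∑' j, ENNReal.ofReal (‖w ^ (z-1) * Complex.exp (-w) * d‖ * Real.exp ‖d‖ * ‖A j‖) :=
            ENNReal.tsum_le_tsum hle
        _ < ⊤ := by
            have hsum : Summable (fun j => ‖w ^ (z-1) * Complex.exp (-w) * d‖ * Real.exp ‖d‖ * ‖A j‖) :=
              (a_summable hz hd).mul_left _
            rw [← ENNReal.ofReal_tsum_of_nonneg (fun j => by positivity) hsum]
            exact ENNReal.ofReal_lt_top
  -- putting it together
  have hcongr : ∫ u in (0:ℝ)..1, d * (w + (u:ℂ) * d) ^ (z-1) * Complex.exp (-(w + (u:ℂ) * d))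
      = ∫ u, (∑' j, F j u) ∂μ := by
    rw [intervalIntegral.integral_of_le zero_le_one, ← hμ]
    apply integral_congr_ae
    rw [hμ]
    filter_upwards [ae_restrict_mem measurableSet_Ioc] with u hu
    exact ((hptw u (Ioc_subset_Icc_self hu)).tsum_eq).symm
  rw [hcongr, hswap]
  have hterm : ∀ j, ∫ u, F j u ∂μ
      = w ^ (z-1) * Complex.exp (-w) * ((∏ i ∈ range j, (1 - z + (i:ℂ))) / (-w)^j *
          (1 - Complex.exp (-d) * ∑ m ∈ range (j+1), d^m / m.factorial)) := by
    intro j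
    rw [hμ, ← intervalIntegral.integral_of_le zero_le_one]
    rw [hF]
    simp only []
    rw [intervalIntegral.integral_const_mul]
    rw [show (w ^ (z-1) * Complex.exp (-w) * (A j * d)) *
        (∫ u in (0:ℝ)..1, (u:ℂ)^j * Complex.exp (-((u:ℂ) * d)))
      = w ^ (z-1) * Complex.exp (-w) * ((A j * d) *
        (∫ u in (0:ℝ)..1, (u:ℂ)^j * Complex.exp (-((u:ℂ) * d)))) from by ring]
    congr 1
    rw [hA]
    have := term_eq (z := z) (d := d) hw0 j
    rw [hxdef]
    linear_combination this
  rw [tsum_congr hterm, tsum_mul_left]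

end

/-- Nielsen's expansion: for `Re z > 0`, `Re w > 0`, `Re(w+d) > 0`, `|d| < |w|`,
`γ(z, w+d) = γ(z,w) + w^{z−1} e^{−w} ∑_{j=0}^∞ ((1−z)_j/(−w)^j)(1 − e^{−d} e_j(d))`,
where `e_j(d) = ∑_{m=0}^j d^m/m!` and `(v)_j` is the Pochhammer symbol. -/
theorem nielsen_expansion (z w d : ℂ) (hz : 0 < z.re) (hw : 0 < w.re)
    (hwd : 0 < (w + d).re) (hd : ‖d‖ < ‖w‖) :
    lowerGamma z (w + d) =
      lowerGamma z w
      + w ^ (z - 1) * Complex.exp (-w) *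
          ∑' j : ℕ,
            ((∏ i ∈ Finset.range j, (1 - z + (i:ℂ))) / (-w) ^ j)
              * (1 - Complex.exp (-d) * ∑ m ∈ Finset.range (j+1), d ^ m / (Nat.factorial m)) := by
  have hd' : ‖d‖ < ‖w‖ := by
    exact hd
  rw [nielsen_step1 hz hw hwd, nielsen_step2 hz hw hd']
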